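/- (Jaccard distance triangle inequality) For finite nonempty sets A, B, C, the Jaccard distance d(A,B) = 1 − |A ∩ B|/|A ∪ B| satisfies the triangle inequality d(A,C) ≤ d(A,B) + d(B,C). -/

import Mathlib

/-!
With `U = A ∪ B ∪ C`, replacing the denominator `|X ∪ Y|` by `|U|` can only decrease
`d(A, B)` and `d(B, C)` (to `|A ∆ B| / |U|` and `|B ∆ C| / |U|`) and only increase `d(A, C)`
(to `1 - |A ∩ C| / |U|`). After that change all three terms share the denominator `|U|`,
and the inequality becomes the counting statement
`|A ∩ B| + |B ∩ C| + |U| ≤ |A ∪ B| + |B ∪ C| + |A ∩ C|`,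
which is two instances of inclusion–exclusion.
-/

open Finset

namespace Finset

variable {α : Type*} [DecidableEq α]

theorem card_inter_add_card_inter_le (A B C : Finset α) :
    #(A ∩ B) + #(B ∩ C) ≤ #B + #(A ∩ C) := by
  have hunion : A ∩ B ∪ B ∩ C ⊆ B := union_subset inter_subset_right inter_subset_left
  have hinter : A ∩ B ∩ (B ∩ C) ⊆ A ∩ C := fun x hx => by
    simp only [mem_inter] at hx ⊢
    exact ⟨hx.1.1, hx.2.2⟩
  rw [← card_union_add_card_inter]
  exact Nat.add_le_add (card_le_card hunion) (card_le_card hinter)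

theorem card_union_union_add_card_le (A B C : Finset α) :
    #(A ∪ B ∪ C) + #B ≤ #(A ∪ B) + #(B ∪ C) := by
  have hunion : A ∪ B ∪ (B ∪ C) = A ∪ B ∪ C := by
    ext x
    simp only [mem_union]
    tauto
  have hinter : B ⊆ (A ∪ B) ∩ (B ∪ C) := subset_inter subset_union_right subset_union_left
  rw [← hunion, ← card_union_add_card_inter (A ∪ B)]
  exact Nat.add_le_add_left (card_le_card hinter) _

theorem card_inter_add_card_inter_add_card_union_le (A B C : Finset α) :
    #(A ∩ B) + #(B ∩ C) + #(A ∪ B ∪ C) ≤ #(A ∪ B) + #(B ∪ C) + #(A ∩ C) := by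
  have := card_inter_add_card_inter_le A B C
  have := card_union_union_add_card_le A B C
  omega

end Finset

section Jaccard

variable {α : Type*} [DecidableEq α]

/-- At `X = Y = ∅` this is `1 - 0 / 0 = 1`. -/
noncomputable def jaccardDist (X Y : Finset α) : ℝ :=
  1 - (#(X ∩ Y) : ℝ) / #(X ∪ Y)

theorem jaccardDist_le_one_sub_div_card {X Y U : Finset α} (hXY : X ∪ Y ⊆ U) :
    jaccardDist X Y ≤ 1 - (#(X ∩ Y) : ℝ) / #U := by
  rcases (X ∪ Y).eq_empty_or_nonempty with hempty | hne
  · have : X ∩ Y = ∅ := subset_empty.mp (hempty ▸ inter_subset_union)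
    simp [jaccardDist, this]
  · refine sub_le_sub_left (div_le_div_of_nonneg_left (Nat.cast_nonneg _) ?_ ?_) 1
    · exact_mod_cast hne.card_pos
    · exact_mod_cast card_le_card hXY

theorem card_union_sub_card_inter_div_card_le_jaccardDist {X Y U : Finset α}
    (hXY : X ∪ Y ⊆ U) :
    ((#(X ∪ Y) : ℝ) - #(X ∩ Y)) / #U ≤ jaccardDist X Y := by
  rcases (X ∪ Y).eq_empty_or_nonempty with hempty | hne
  · have : X ∩ Y = ∅ := subset_empty.mp (hempty ▸ inter_subset_union)
    simp [jaccardDist, hempty, this]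
  · have hpos : (0 : ℝ) < #(X ∪ Y) := by exact_mod_cast hne.card_pos
    have hinter : (#(X ∩ Y) : ℝ) ≤ #(X ∪ Y) := by exact_mod_cast card_le_card inter_subset_union
    calc ((#(X ∪ Y) : ℝ) - #(X ∩ Y)) / #U
        ≤ ((#(X ∪ Y) : ℝ) - #(X ∩ Y)) / #(X ∪ Y) :=
          div_le_div_of_nonneg_left (sub_nonneg.mpr hinter) hpos (mod_cast card_le_card hXY)
      _ = jaccardDist X Y := by rw [jaccardDist, sub_div, div_self hpos.ne']

theorem jaccardDist_triangle (A B C : Finset α) :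
    jaccardDist A C ≤ jaccardDist A B + jaccardDist B C := by
  set U := A ∪ B ∪ C
  rcases U.eq_empty_or_nonempty with hU | hU
  · obtain ⟨rfl, rfl, rfl⟩ : A = ∅ ∧ B = ∅ ∧ C = ∅ := by simpa [U] using hU
    norm_num [jaccardDist]
  have hn : (0 : ℝ) < #U := by exact_mod_cast hU.card_pos
  have hcount : (#(A ∩ B) : ℝ) + #(B ∩ C) + #U ≤ #(A ∪ B) + #(B ∪ C) + #(A ∩ C) := by
    exact_mod_cast card_inter_add_card_inter_add_card_union_le A B C
  have hAB := card_union_sub_card_inter_div_card_le_jaccardDist (subset_union_left : A ∪ B ⊆ U)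
  have hBC := card_union_sub_card_inter_div_card_le_jaccardDist
    (union_subset (subset_union_right.trans subset_union_left) subset_union_right : B ∪ C ⊆ U)
  have hAC := jaccardDist_le_one_sub_div_card
    (union_subset (subset_union_left.trans subset_union_left) subset_union_right : A ∪ C ⊆ U)
  calc jaccardDist A C ≤ 1 - (#(A ∩ C) : ℝ) / #U := hAC
    _ = ((#U : ℝ) - #(A ∩ C)) / #U := by rw [sub_div, div_self hn.ne']
    _ ≤ (((#(A ∪ B) : ℝ) - #(A ∩ B)) + ((#(B ∪ C) : ℝ) - #(B ∩ C))) / #U :=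
        div_le_div_of_nonneg_right (by linarith) hn.le
    _ ≤ jaccardDist A B + jaccardDist B C := by rw [add_div]; exact add_le_add hAB hBC

end Jaccard

theorem jaccard_distance_triangle_general {α : Type*} [DecidableEq α]
    (d : Finset α → Finset α → ℝ)
    (hd : ∀ X Y : Finset α,
      d X Y = 1 - ((X ∩ Y).card : ℝ) / ((X ∪ Y).card : ℝ))
    (A B C : Finset α) :
    d A C ≤ d A B + d B C := by
  simp only [hd]
  exact jaccardDist_triangle A B C

/-- The Jaccard distance `d(A,B) = 1 − |A ∩ B|/|A ∪ B|` on finite nonempty sets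
satisfies the triangle inequality `d(A,C) ≤ d(A,B) + d(B,C)`. -/
theorem jaccard_distance_triangle {α : Type*} [DecidableEq α]
    (d : Finset α → Finset α → ℝ)
    (hd : ∀ X Y : Finset α,
      d X Y = 1 - ((X ∩ Y).card : ℝ) / ((X ∪ Y).card : ℝ))
    (A B C : Finset α) (hA : A.Nonempty) (hB : B.Nonempty) (hC : C.Nonempty) :
    d A C ≤ d A B + d B C :=
  jaccard_distance_triangle_general d hd A B C
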